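/- arXiv:2201.03062 — 5 statements merged into one kernel-verified Lean document; each statement's English description precedes it below -/
import Mathlib

section
/- For any positive integers m and n, any real m×n matrix A, and any real number T>1, there exist p ∈ ℤ^m and q ∈ ℤ^n ∖ {0} such that ‖Aq − p‖^m ≤ 1/T and ‖q‖^n < T. -/
/-!
Minkowski's convex body theorem, applied to the unimodular lattice `{(Aq - p, q)}` and the open
box `‖x‖ < d, ‖y‖ < t` with `t ^ n = T`, yields a nonzero `q` with `‖q‖ < t` and
`‖Aq - p‖ < d` as soon as `d ^ m * T > 1`. An open box cannot give the non-strict bound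
`‖Aq - p‖ ^ m ≤ 1 / T` directly, so take for `d` the least distance from `Aq` to `ℤ^m` over
the finitely many nonzero `q` with `‖q‖ < t`: if `d ^ m > 1 / T`, the box would contain a
candidate beating the minimum.
-/

open MeasureTheory Filter Set

noncomputable section

/-- The coercion of an integer vector to a real vector (with the supremum norm). -/
def toR {k : ℕ} (q : Fin k → ℤ) : Fin k → ℝ := fun i => (q i : ℝ)

open Matrix

variable {ι κ : Type*} [Fintype ι] [Fintype κ]

theorem exists_ne_zero_intCast_mem_of_two_pow_card_lt_volume {s : Set (ι → ℝ)}
    (h_symm : ∀ x ∈ s, -x ∈ s) (h_conv : Convex ℝ s) (h : 2 ^ Fintype.card ι < volume s) :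
    ∃ c : ι → ℤ, c ≠ 0 ∧ (fun i => (c i : ℝ)) ∈ s := by
  classical
  let L := Submodule.span ℤ (Set.range (Pi.basisFun ℝ ι))
  have : Countable L.toAddSubgroup := inferInstanceAs (Countable L)
  have h_vol : volume (ZSpan.fundamentalDomain (Pi.basisFun ℝ ι)) *
      2 ^ Module.finrank ℝ (ι → ℝ) < volume s := by
    have h_one : of (Pi.basisFun ℝ ι) = 1 := by
      ext i j; simp [Pi.single_apply, one_apply, eq_comm]
    simpa [ZSpan.volume_fundamentalDomain, h_one] using h
  obtain ⟨⟨x, hxL⟩, hx0, hxs⟩ :=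
    exists_ne_zero_mem_lattice_of_measure_mul_two_pow_lt_measure
      (ZSpan.isAddFundamentalDomain' _ volume) h_symm h_conv h_vol
  obtain ⟨c, rfl⟩ := (Submodule.mem_span_range_iff_exists_fun ℤ).mp hxL
  refine ⟨c, ?_, ?_⟩
  · rintro rfl
    simp at hx0
  · convert hxs using 1
    ext i
    simp [Pi.single_apply]

theorem exists_ne_zero_mulVec_intCast_mem [DecidableEq ι] {M : Matrix ι ι ℝ} (hM : |M.det| = 1)
    {s : Set (ι → ℝ)} (h_symm : ∀ x ∈ s, -x ∈ s) (h_conv : Convex ℝ s)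
    (h : 2 ^ Fintype.card ι < volume s) :
    ∃ c : ι → ℤ, c ≠ 0 ∧ M *ᵥ (fun i => (c i : ℝ)) ∈ s := by
  have hdet : LinearMap.det (toLin' M) ≠ 0 := by
    rw [LinearMap.det_toLin']
    rintro h0
    simp [h0] at hM
  apply exists_ne_zero_intCast_mem_of_two_pow_card_lt_volume (s := toLin' M ⁻¹' s)
  · intro x hx
    simpa [mulVec_neg] using h_symm _ hx
  · exact h_conv.linear_preimage _
  · rwa [Measure.addHaar_preimage_linearMap _ hdet, LinearMap.det_toLin', abs_inv, hM, inv_one,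
      ENNReal.ofReal_one, one_mul]

theorem volume_pi_Ioo_neg (r : ι → ℝ) (hr : ∀ i, 0 ≤ r i) :
    volume (univ.pi fun i => Ioo (-r i) (r i)) = ENNReal.ofReal (∏ i, 2 * r i) := by
  rw [Real.volume_pi_Ioo, ENNReal.ofReal_prod_of_nonneg fun i _ => by linarith [hr i]]
  congr! 2 with i
  ring

theorem exists_int_approx_of_one_lt_pow_mul_pow (A : Matrix ι κ ℝ) {d t : ℝ} (hd : 0 < d)
    (hd1 : d ≤ 1) (ht : 0 < t) (h : 1 < d ^ Fintype.card ι * t ^ Fintype.card κ) :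
    ∃ (p : ι → ℤ) (q : κ → ℤ), q ≠ 0 ∧
      ‖fun i => ∑ j, A i j * (q j : ℝ) - p i‖ < d ∧ ‖fun j => (q j : ℝ)‖ < t := by
  classical
  set r : ι ⊕ κ → ℝ := Sum.elim (fun _ => d) (fun _ => t)
  have hr : ∀ k, 0 ≤ r k := by rintro (i | j) <;> simp [r, hd.le, ht.le]
  set box := univ.pi fun k => Ioo (-r k) (r k)
  have h_symm : ∀ x ∈ box, -x ∈ box := by
    intro x hx k _
    have hxk := hx k (mem_univ k)
    simp only [mem_Ioo, Pi.neg_apply] at hxk ⊢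
    constructor <;> linarith [hxk.1, hxk.2]
  have h_vol : 2 ^ Fintype.card (ι ⊕ κ) < volume box := by
    have h_prod : ∏ k, 2 * r k =
        2 ^ Fintype.card (ι ⊕ κ) * (d ^ Fintype.card ι * t ^ Fintype.card κ) := by
      simp only [Fintype.prod_sum_type, Sum.elim_inl, Sum.elim_inr, Finset.prod_const,
        Finset.card_univ, mul_pow, Fintype.card_sum, pow_add, r]
      ring
    rw [volume_pi_Ioo_neg r hr, h_prod, ← ENNReal.ofReal_ofNat,
      ← ENNReal.ofReal_pow zero_le_two, ENNReal.ofReal_lt_ofReal_iff (by positivity)]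
    exact lt_mul_right (by positivity) h
  set M : Matrix (ι ⊕ κ) (ι ⊕ κ) ℝ := fromBlocks (-1) A 0 1
  have hM : |M.det| = 1 := by simp [M, det_neg]
  obtain ⟨c, hc0, hc⟩ := exists_ne_zero_mulVec_intCast_mem hM h_symm
    (convex_pi fun k _ => convex_Ioo _ _) h_vol
  have hc_mem : ∀ k, |(M *ᵥ fun k => (c k : ℝ)) k| < r k := fun k =>
    abs_lt.mpr (hc k (mem_univ k))
  have hc_inl : ∀ i, (M *ᵥ fun k => (c k : ℝ)) (Sum.inl i) =
      ∑ j, A i j * (c (Sum.inr j) : ℝ) - c (Sum.inl i) := by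
    intro i
    simp [M, mulVec, dotProduct, one_apply, sub_eq_neg_add]
  have hc_inr : ∀ j, (M *ᵥ fun k => (c k : ℝ)) (Sum.inr j) = c (Sum.inr j) := by
    intro j
    simp [M, fromBlocks_mulVec]
  refine ⟨fun i => c (Sum.inl i), fun j => c (Sum.inr j), ?_, ?_, ?_⟩
  · intro hq
    have hq' : ∀ j, c (Sum.inr j) = 0 := fun j => congrFun hq j
    refine hc0 (funext fun k => ?_)
    rcases k with i | j
    · have hp : |(c (Sum.inl i) : ℝ)| < 1 := by
        simpa [hc_inl, hq', r] using (hc_mem (Sum.inl i)).trans_le hd1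
      exact_mod_cast Int.abs_lt_one_iff.mp (by exact_mod_cast hp)
    · exact hq' j
  · refine (pi_norm_lt_iff hd).mpr fun i => ?_
    simpa [hc_inl, r] using hc_mem (Sum.inl i)
  · refine (pi_norm_lt_iff ht).mpr fun j => ?_
    simpa [hc_inr, r] using hc_mem (Sum.inr j)

def distIntVec (x : ι → ℝ) : ℝ := ‖fun i => x i - round (x i)‖

theorem distIntVec_nonneg (x : ι → ℝ) : 0 ≤ distIntVec x := norm_nonneg _

theorem distIntVec_le (x : ι → ℝ) (p : ι → ℤ) : distIntVec x ≤ ‖fun i => x i - p i‖ :=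
  (pi_norm_le_iff_of_nonneg (norm_nonneg _)).mpr fun i =>
    (round_le (x i) (p i)).trans (norm_le_pi_norm (fun i => x i - p i) i)

theorem distIntVec_le_half (x : ι → ℝ) : distIntVec x ≤ 1 / 2 :=
  (pi_norm_le_iff_of_nonneg (by norm_num)).mpr fun i => abs_sub_round (x i)

theorem finite_setOf_norm_intCast_lt (t : ℝ) :
    {q : κ → ℤ | ‖fun j => (q j : ℝ)‖ < t}.Finite := by
  classical
  refine (Set.finite_Icc (fun _ => -⌈t⌉) (fun _ => ⌈t⌉)).subset fun q hq => ?_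
  have hq_le : ∀ j, |q j| ≤ ⌈t⌉ := fun j => by
    have hqj := (norm_le_pi_norm (fun j => (q j : ℝ)) j).trans_lt hq
    rw [Real.norm_eq_abs] at hqj
    exact_mod_cast hqj.le.trans (Int.le_ceil t)
  exact ⟨fun j => neg_le_of_abs_le (hq_le j), fun j => le_of_abs_le (hq_le j)⟩

/-- **Dirichlet's Theorem** in higher dimensions: for any real `m × n` matrix `A` and any
real `T > 1`, there exist `p ∈ ℤ^m` and `q ∈ ℤ^n \ {0}` with `‖Aq - p‖^m ≤ 1/T` and
`‖q‖^n < T` (supremum norms). -/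
theorem stmt_0 (m n : ℕ) (hm : 0 < m) (hn : 0 < n)
    (A : Fin m → Fin n → ℝ) (T : ℝ) (hT : 1 < T) :
    ∃ (p : Fin m → ℤ) (q : Fin n → ℤ), q ≠ 0 ∧
      ‖(fun i => (∑ j, A i j * (q j : ℝ)) - (p i : ℝ) : Fin m → ℝ)‖ ^ m ≤ 1 / T ∧
      ‖toR q‖ ^ n < T := by
  obtain ⟨t, ht1, htT⟩ : ∃ t : ℝ, 1 < t ∧ t ^ n = T := by
    refine ⟨T ^ (n : ℝ)⁻¹, Real.one_lt_rpow hT (by positivity), ?_⟩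
    rw [← Real.rpow_natCast, ← Real.rpow_mul (by linarith), inv_mul_cancel₀ (by positivity),
      Real.rpow_one]
  set S := {q : Fin n → ℤ | q ≠ 0 ∧ ‖toR q‖ < t}
  have hS_fin : S.Finite := (finite_setOf_norm_intCast_lt t).subset fun q hq => hq.2
  have hS_ne : S.Nonempty := by
    have h_single : toR (Pi.single ⟨0, hn⟩ 1) = Pi.single ⟨0, hn⟩ 1 := by
      ext j; simp [toR, Pi.single_apply]
    exact ⟨Pi.single ⟨0, hn⟩ 1, by simp, by rwa [h_single, Pi.norm_single, norm_one]⟩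
  set F := fun q : Fin n → ℤ => distIntVec fun i => ∑ j, A i j * (q j : ℝ)
  obtain ⟨q₀, hq₀, hq₀_min⟩ := Set.exists_min_image S F hS_fin hS_ne
  by_cases hF : F q₀ ^ m ≤ 1 / T
  · refine ⟨fun i => round (∑ j, A i j * (q₀ j : ℝ)), q₀, hq₀.1, hF, ?_⟩
    rw [← htT]
    exact pow_lt_pow_left₀ hq₀.2 (norm_nonneg _) hn.ne'
  rw [not_le] at hF
  have hF_pos : 0 < F q₀ := lt_of_pow_lt_pow_left₀ m (distIntVec_nonneg _)
    (by rw [zero_pow hm.ne']; exact (by positivity : (0 : ℝ) < 1 / T).trans hF)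
  have hF_vol : 1 < F q₀ ^ Fintype.card (Fin m) * t ^ Fintype.card (Fin n) := by
    rw [Fintype.card_fin, Fintype.card_fin, htT, ← div_lt_iff₀ (by linarith)]
    exact hF
  obtain ⟨p, q, hq0, hqA, hqt⟩ := exists_int_approx_of_one_lt_pow_mul_pow A hF_pos
    ((distIntVec_le_half _).trans (by norm_num)) (by linarith) hF_vol
  exact absurd (hq₀_min q ⟨hq0, hqt⟩) (not_le.mpr ((distIntVec_le _ p).trans_lt hqA))
end
end

section
/- For any positive integers m and n and any real m×n matrix A, there exist infinitely many integer vectors q ∈ ℤ^n such that ‖Aq − p‖^m ≤ 1/‖q‖^n for some p ∈ ℤ^m. -/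
/-!
Dirichlet's pigeonhole argument gives, for every `K ≥ 1`, a nonzero `q ∈ ℤ^n` with `‖q‖ ≤ K^m` and
`‖Aq - p‖ < K^(-n)` for some `p ∈ ℤ^m`; such a `q` satisfies `‖Aq - p‖^m ≤ K^(-nm) ≤ ‖q‖^(-n)`.
If `Aq₀` is an integer vector for some `q₀ ≠ 0`, every multiple of `q₀` is a solution. Otherwise
each solution `q ≠ 0` keeps `Aq` at positive distance from `ℤ^m`, while Dirichlet's solutions
bring `Aq` arbitrarily close to `ℤ^m`, so finitely many solutions cannot suffice.
-/

open MeasureTheory Filter Set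

noncomputable section

open Matrix Fintype

section

variable {ι κ : Type*} [Fintype ι] [Fintype κ]

theorem abs_sub_lt_one_div_of_floor_mul_eq {M x y : ℝ} (hM : 0 < M) (h : ⌊M * x⌋ = ⌊M * y⌋) :
    |x - y| < 1 / M := by
  have := Int.abs_sub_lt_one_of_floor_eq_floor h
  rw [← mul_sub, abs_mul, abs_of_pos hM] at this
  rwa [lt_div_iff₀ hM, mul_comm]

/-- Pigeonhole: the fractional parts of the `(K ^ card ι + 1) ^ card κ` vectors `A v`,
`v ∈ {0, …, K ^ card ι} ^ κ`, fall into only `(K ^ card κ) ^ card ι` boxes of side `1 / K ^ card κ`. -/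
theorem exists_ne_abs_fract_mulVec_sub_lt [Nonempty κ] (A : Matrix ι κ ℝ) {K : ℕ} (hK : 0 < K) :
    ∃ v w : κ → ℕ, v ≠ w ∧ (∀ j, v j ≤ K ^ card ι) ∧ (∀ j, w j ≤ K ^ card ι) ∧
      ∀ i, |Int.fract ((A *ᵥ (Nat.cast ∘ v)) i) - Int.fract ((A *ᵥ (Nat.cast ∘ w)) i)| <
        1 / (K : ℝ) ^ card κ := by
  classical
  set Q := K ^ card ι
  set M := K ^ card κ
  have hM : (0 : ℝ) < M := by positivity
  let x : (κ → ℕ) → ι → ℝ := fun v => A *ᵥ (Nat.cast ∘ v)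
  let box : (κ → ℕ) → ι → ℤ := fun v i => ⌊(M : ℝ) * Int.fract (x v i)⌋
  have hmaps : MapsTo box ↑(piFinset fun _ : κ => Finset.range (Q + 1))
      ↑(piFinset fun _ : ι => Finset.Ico 0 (M : ℤ)) := by
    intro v _
    simp only [Finset.mem_coe, mem_piFinset, Finset.mem_Ico, Int.floor_nonneg, Int.floor_lt, box]
    intro i
    exact ⟨by positivity, by
      push_cast; nlinarith [Int.fract_lt_one (x v i), Int.fract_nonneg (x v i)]⟩
  have hcard : (piFinset fun _ : ι => Finset.Ico 0 (M : ℤ)).card <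
      (piFinset fun _ : κ => Finset.range (Q + 1)).card := by
    simp only [card_piFinset, Int.card_Ico, sub_zero, Int.toNat_natCast, Finset.card_range,
      Finset.prod_const, Finset.card_univ, Q, M, ← pow_mul, mul_comm (card κ)]
    rw [pow_mul]
    exact Nat.pow_lt_pow_left (Nat.lt_succ_self _) card_ne_zero
  obtain ⟨v, hv, w, hw, hvw, hbox⟩ := Finset.exists_ne_map_eq_of_card_lt_of_maps_to hcard hmaps
  simp only [mem_piFinset, Finset.mem_range, Nat.lt_succ_iff] at hv hw
  refine ⟨v, w, hvw, hv, hw, fun i => ?_⟩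
  simpa [M] using abs_sub_lt_one_div_of_floor_mul_eq hM (congrFun hbox i)

theorem exists_int_norm_mulVec_sub_lt [Nonempty κ] (A : Matrix ι κ ℝ) {K : ℕ} (hK : 0 < K) :
    ∃ q : κ → ℤ, q ≠ 0 ∧ ‖(Int.cast ∘ q : κ → ℝ)‖ ≤ (K : ℝ) ^ card ι ∧
      ∃ p : ι → ℤ, ‖A *ᵥ (Int.cast ∘ q) - Int.cast ∘ p‖ < 1 / (K : ℝ) ^ card κ := by
  obtain ⟨v, w, hvw, hv, hw, hfract⟩ := exists_ne_abs_fract_mulVec_sub_lt A hK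
  set x := A *ᵥ (Nat.cast ∘ v)
  set y := A *ᵥ (Nat.cast ∘ w)
  have hq : (Int.cast ∘ fun j => (v j : ℤ) - w j : κ → ℝ) = Nat.cast ∘ v - Nat.cast ∘ w := by
    ext j; simp
  refine ⟨fun j => v j - w j, fun h => hvw (funext fun j => ?_), ?_,
    fun i => ⌊x i⌋ - ⌊y i⌋, ?_⟩
  · have := congrFun h j
    simp only [Pi.zero_apply, sub_eq_zero] at this
    exact_mod_cast this
  · refine (pi_norm_le_iff_of_nonneg (by positivity)).2 fun j => ?_
    have hvj : (v j : ℝ) ≤ (K : ℝ) ^ card ι := by exact_mod_cast hv j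
    have hwj : (w j : ℝ) ≤ (K : ℝ) ^ card ι := by exact_mod_cast hw j
    rw [hq, Pi.sub_apply, Real.norm_eq_abs, abs_sub_le_iff]
    constructor <;> simp only [Function.comp_apply] <;>
      linarith [(v j).cast_nonneg (α := ℝ), (w j).cast_nonneg (α := ℝ)]
  · rw [hq, mulVec_sub, pi_norm_lt_iff (by positivity)]
    intro i
    convert hfract i using 1
    rw [Real.norm_eq_abs, Int.fract, Int.fract]
    simp only [Pi.sub_apply, Function.comp_apply, Int.cast_sub, x, y]
    ring_nf

def dirichletSet (A : Matrix ι κ ℝ) : Set (κ → ℤ) :=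
  {q | ∃ p : ι → ℤ, ‖A *ᵥ (Int.cast ∘ q) - Int.cast ∘ p‖ ^ card ι ≤
    1 / ‖(Int.cast ∘ q : κ → ℝ)‖ ^ card κ}

variable {A : Matrix ι κ ℝ}

theorem mem_dirichletSet_of_norm_le {K : ℕ} {q : κ → ℤ} {p : ι → ℤ} (hq : q ≠ 0)
    (hqK : ‖(Int.cast ∘ q : κ → ℝ)‖ ≤ (K : ℝ) ^ card ι)
    (hp : ‖A *ᵥ (Int.cast ∘ q) - Int.cast ∘ p‖ ≤ 1 / (K : ℝ) ^ card κ) :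
    q ∈ dirichletSet A := by
  have hq_pos : 0 < ‖(Int.cast ∘ q : κ → ℝ)‖ :=
    norm_pos_iff.2 fun h => hq (funext fun j => by simpa using congrFun h j)
  refine ⟨p, ?_⟩
  calc ‖A *ᵥ (Int.cast ∘ q) - Int.cast ∘ p‖ ^ card ι
      ≤ (1 / (K : ℝ) ^ card κ) ^ card ι := pow_le_pow_left₀ (norm_nonneg _) hp _
    _ = 1 / ((K : ℝ) ^ card ι) ^ card κ := by rw [div_pow, one_pow, ← pow_mul, ← pow_mul, mul_comm]
    _ ≤ 1 / ‖(Int.cast ∘ q : κ → ℝ)‖ ^ card κ := by gcongr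

theorem zsmul_mem_dirichletSet [Nonempty ι] {q : κ → ℤ} {p : ι → ℤ}
    (h : A *ᵥ (Int.cast ∘ q) = Int.cast ∘ p) (k : ℤ) : k • q ∈ dirichletSet A := by
  refine ⟨k • p, ?_⟩
  have hk : (Int.cast ∘ (k • q) : κ → ℝ) = k • (Int.cast ∘ q) := by ext; simp
  have hk' : (Int.cast ∘ (k • p) : ι → ℝ) = k • (Int.cast ∘ p) := by ext; simp
  rw [hk, hk', mulVec_smul, h, sub_self, norm_zero, zero_pow card_ne_zero]
  positivity

theorem dirichletSet_infinite_of_mulVec_eq [Nonempty ι] {q : κ → ℤ} {p : ι → ℤ} (hq : q ≠ 0)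
    (h : A *ᵥ (Int.cast ∘ q) = Int.cast ∘ p) : (dirichletSet A).Infinite :=
  (Set.infinite_range_of_injective (smul_left_injective ℤ hq)).mono
    (range_subset_iff.2 (zsmul_mem_dirichletSet h))

theorem norm_sub_round_le (v : ι → ℝ) (p : ι → ℤ) :
    ‖v - Int.cast ∘ round ∘ v‖ ≤ ‖v - Int.cast ∘ p‖ :=
  (pi_norm_le_iff_of_nonneg (norm_nonneg _)).2 fun i =>
    (round_le (v i) (p i)).trans (norm_le_pi_norm (v - Int.cast ∘ p) i)

theorem exists_mem_dirichletSet_norm_lt [Nonempty κ] (A : Matrix ι κ ℝ) {ε : ℝ} (hε : 0 < ε) :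
    ∃ q ∈ dirichletSet A, q ≠ 0 ∧ ∃ p : ι → ℤ, ‖A *ᵥ (Int.cast ∘ q) - Int.cast ∘ p‖ < ε := by
  obtain ⟨N, hN⟩ := exists_nat_one_div_lt hε
  obtain ⟨q, hq, hqK, p, hp⟩ := exists_int_norm_mulVec_sub_lt A N.succ_pos
  refine ⟨q, mem_dirichletSet_of_norm_le hq hqK hp.le, hq, p, hp.trans_le ?_⟩
  push_cast
  calc 1 / ((N : ℝ) + 1) ^ card κ ≤ 1 / ((N : ℝ) + 1) := by
        gcongr
        exact le_self_pow₀ (by linarith [N.cast_nonneg (α := ℝ)]) card_ne_zero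
    _ ≤ ε := hN.le

theorem dirichletSet_infinite [Nonempty ι] [Nonempty κ] (A : Matrix ι κ ℝ) :
    (dirichletSet A).Infinite := by
  intro hfin
  set d : (κ → ℤ) → ℝ := fun q => ‖A *ᵥ (Int.cast ∘ q) - Int.cast ∘ round ∘ (A *ᵥ (Int.cast ∘ q))‖
  obtain ⟨q, ⟨-, hq⟩, hdq⟩ : ∃ q ∈ dirichletSet A \ {0}, d q = 0 := by
    by_contra! hd
    obtain ⟨q₁, hq₁, hq₁0, -⟩ := exists_mem_dirichletSet_norm_lt A one_pos
    obtain ⟨q, hq, hmin⟩ := (dirichletSet A \ {0}).exists_min_image d hfin.sdiff ⟨q₁, hq₁, hq₁0⟩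
    obtain ⟨q', hq', hq'0, p, hp⟩ :=
      exists_mem_dirichletSet_norm_lt A ((norm_nonneg _).lt_of_ne' (hd q hq))
    exact (hmin q' ⟨hq', hq'0⟩).not_gt ((norm_sub_round_le _ p).trans_lt hp)
  exact dirichletSet_infinite_of_mulVec_eq hq (sub_eq_zero.1 (norm_eq_zero.1 hdq)) hfin

end

/-- For any real `m × n` matrix `A` there exist infinitely many integer vectors `q ∈ ℤ^n`
such that `‖Aq - p‖^m ≤ 1/‖q‖^n` for some `p ∈ ℤ^m` (supremum norms). -/
theorem stmt_1 (m n : ℕ) (hm : 0 < m) (hn : 0 < n) (A : Fin m → Fin n → ℝ) :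
    {q : Fin n → ℤ | ∃ p : Fin m → ℤ,
      ‖(fun i => (∑ j, A i j * (q j : ℝ)) - (p i : ℝ) : Fin m → ℝ)‖ ^ m ≤
        1 / ‖toR q‖ ^ n}.Infinite := by
  have : Nonempty (Fin m) := Fin.pos_iff_nonempty.1 hm
  have : Nonempty (Fin n) := Fin.pos_iff_nonempty.1 hn
  have h := dirichletSet_infinite A
  simp only [dirichletSet, card_fin] at h
  exact h
end
end

section
/- Let ψ : [T_0,∞) → ℝ_+ be a continuous, nonincreasing function with T_0 ∈ ℝ_+, and let m,n be positive integers. Then there exists a continuous function z : [t_0,∞) → ℝ, where t_0 := (m/(m+n))·log T_0 − (n/(m+n))·log ψ(T_0), such that: (i) t ↦ t + n·z(t) is strictly increasing and unbounded; (ii) t ↦ t − m·z(t) is nondecreasing; and (iii) ψ(e^{t+n·z(t)}) = e^{−t+m·z(t)} for all t ≥ t_0. -/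
/-!
With `g s := log ψ(e^s)` (extended constantly to the left of `log T₀`), condition (iii) reads
`g (t + n z) = -t + m z`. Substituting `s = t + n z` this says `t = F s` with
`F s = (m s - n g s) / (m + n)`. Since `g` is continuous and nonincreasing, `F` is a continuous
strictly increasing bijection of `ℝ`, so `σ := F⁻¹` and `z t := (σ t - t) / n` work:
`t + n z = σ` is strictly increasing onto `ℝ` and `t - m z = -g ∘ σ` is nondecreasing.
The starting point `t₀` is exactly `F (log T₀)`.
-/

open Filter Set

section LinearPlusMonotone

variable {c : ℝ} {h : ℝ → ℝ}

theorem strictMono_mul_add_of_monotone (hc : 0 < c) (hh : Monotone h) :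
    StrictMono fun s => c * s + h s :=
  (strictMono_mul_left_of_pos hc).add_monotone hh

theorem surjective_mul_add_of_monotone (hc : 0 < c) (hh : Monotone h) (hcont : Continuous h) :
    Function.Surjective fun s => c * s + h s := by
  have hlin_top : Tendsto (fun s => c * s + h 0) atTop atTop :=
    tendsto_atTop_add_const_right _ _ (tendsto_id.const_mul_atTop hc)
  have hlin_bot : Tendsto (fun s => c * s + h 0) atBot atBot :=
    tendsto_atBot_add_const_right _ _ (tendsto_id.const_mul_atBot hc)
  refine ((continuous_const.mul continuous_id).add hcont).surjective ?_ ?_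
  · refine tendsto_atTop_mono' _ ?_ hlin_top
    filter_upwards [eventually_ge_atTop 0] with s hs
    exact add_le_add_right (hh hs) _
  · refine tendsto_atBot_mono' _ ?_ hlin_bot
    filter_upwards [eventually_le_atBot 0] with s hs
    exact add_le_add_right (hh hs) _

end LinearPlusMonotone

theorem Antitone.exists_dani_correspondence {g : ℝ → ℝ} (hg : Antitone g) (hgc : Continuous g)
    {a b : ℝ} (ha : 0 < a) (hb : 0 < b) :
    ∃ z : ℝ → ℝ, Continuous z ∧ StrictMono (fun t => t + b * z t) ∧
      Function.Surjective (fun t => t + b * z t) ∧ Monotone (fun t => t - a * z t) ∧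
      ∀ t, g (t + b * z t) = -t + a * z t := by
  have hab : 0 < a + b := add_pos ha hb
  set F : ℝ → ℝ := fun s => a / (a + b) * s + -(b / (a + b)) * g s
  have hmono : Monotone fun s => -(b / (a + b)) * g s :=
    hg.const_mul_of_nonpos (neg_nonpos.2 (div_pos hb hab).le)
  let σ : ℝ ≃o ℝ := StrictMono.orderIsoOfSurjective F
    (strictMono_mul_add_of_monotone (div_pos ha hab) hmono)
    (surjective_mul_add_of_monotone (div_pos ha hab) hmono (continuous_const.mul hgc))
  have hFσ : ∀ t, F (σ.symm t) = t := σ.apply_symm_apply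
  have hshift : ∀ t, t + b * ((σ.symm t - t) / b) = σ.symm t := fun t => by
    field_simp; ring
  have hrel : ∀ t, g (σ.symm t) = -t + a * ((σ.symm t - t) / b) := fun t => by
    have := hFσ t
    simp only [F] at this
    field_simp at this ⊢
    linear_combination -this
  refine ⟨fun t => (σ.symm t - t) / b, (σ.symm.continuous.sub continuous_id).div_const b,
    ?_, ?_, ?_, fun t => by simp only [hshift, hrel]⟩
  · simpa only [hshift] using σ.symm.strictMono
  · simpa only [hshift] using σ.symm.surjective
  · intro t u htu
    have := hg (σ.symm.monotone htu)
    simp only [hrel] at this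
    linarith

section LogExp

variable {ψ : ℝ → ℝ} {T₀ : ℝ}

theorem antitone_log_comp_max_exp (hψmono : AntitoneOn ψ (Ici T₀)) (hψpos : ∀ x ≥ T₀, 0 < ψ x) :
    Antitone fun s => Real.log (ψ (max (Real.exp s) T₀)) := fun _ _ hsu =>
  Real.log_le_log (hψpos _ (le_max_right _ _))
    (hψmono (mem_Ici.2 (le_max_right _ _)) (mem_Ici.2 (le_max_right _ _))
      (max_le_max_right _ (Real.exp_le_exp.2 hsu)))

theorem continuous_log_comp_max_exp (hψc : ContinuousOn ψ (Ici T₀))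
    (hψpos : ∀ x ≥ T₀, 0 < ψ x) :
    Continuous fun s => Real.log (ψ (max (Real.exp s) T₀)) :=
  (hψc.comp_continuous (Real.continuous_exp.max continuous_const)
    fun _ => mem_Ici.2 (le_max_right _ _)).log fun _ => (hψpos _ (le_max_right _ _)).ne'

end LogExp

/-- **Dani correspondence (Kleinbock–Margulis)**: for a continuous nonincreasing
`ψ : [T₀,∞) → ℝ₊` there is a continuous function `z : [t₀,∞) → ℝ`, where
`t₀ = (m/(m+n))·log T₀ − (n/(m+n))·log ψ(T₀)`, such that (i) `t ↦ t + n·z(t)` is strictly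
increasing and unbounded, (ii) `t ↦ t − m·z(t)` is nondecreasing, and
(iii) `ψ(e^{t+n·z(t)}) = e^{−t+m·z(t)}` for all `t ≥ t₀`. -/
theorem stmt_11 (m n : ℕ) (hm : 0 < m) (hn : 0 < n) (T₀ : ℝ) (hT₀ : 0 < T₀)
    (ψ : ℝ → ℝ) (hψc : ContinuousOn ψ (Set.Ici T₀))
    (hψmono : AntitoneOn ψ (Set.Ici T₀)) (hψpos : ∀ x ≥ T₀, 0 < ψ x)
    (t₀ : ℝ)
    (ht₀ : t₀ = ((m : ℝ) / (m + n)) * Real.log T₀ - ((n : ℝ) / (m + n)) * Real.log (ψ T₀)) :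
    ∃ z : ℝ → ℝ,
      ContinuousOn z (Set.Ici t₀) ∧
      StrictMonoOn (fun t => t + n * z t) (Set.Ici t₀) ∧
      (∀ C : ℝ, ∃ t ≥ t₀, C < t + n * z t) ∧
      MonotoneOn (fun t => t - m * z t) (Set.Ici t₀) ∧
      ∀ t ≥ t₀, ψ (Real.exp (t + n * z t)) = Real.exp (-t + m * z t) := by
  set g : ℝ → ℝ := fun s => Real.log (ψ (max (Real.exp s) T₀))
  have hg_anti : Antitone g := antitone_log_comp_max_exp hψmono hψpos
  have hg_cont : Continuous g := continuous_log_comp_max_exp hψc hψpos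
  obtain ⟨z, hz_cont, hσ_mono, hσ_surj, hz_mono, hz_rel⟩ :=
    hg_anti.exists_dani_correspondence hg_cont (Nat.cast_pos.2 hm) (Nat.cast_pos.2 hn)
  have hσ_t₀ : t₀ + n * z t₀ = Real.log T₀ := by
    obtain ⟨t₁, ht₁⟩ := hσ_surj (Real.log T₀)
    have hrel := hz_rel t₁
    simp only [ht₁, g, Real.exp_log hT₀, max_self] at hrel
    have ht₁_eq : t₁ = t₀ := by
      rw [ht₀]
      field_simp
      linear_combination (n : ℝ) * hrel + (m : ℝ) * ht₁
    rwa [← ht₁_eq]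
  have hσ_ge : ∀ t ≥ t₀, Real.log T₀ ≤ t + n * z t := fun t ht =>
    hσ_t₀ ▸ hσ_mono.monotone ht
  refine ⟨z, hz_cont.continuousOn, hσ_mono.strictMonoOn _, fun C => ?_, hz_mono.monotoneOn _,
    fun t ht => ?_⟩
  · obtain ⟨t, ht⟩ := hσ_surj (max (C + 1) (Real.log T₀))
    refine ⟨t, hσ_mono.le_iff_le.1 ?_, ?_⟩
    · simp only [ht, hσ_t₀, le_max_right]
    · simp only [ht]
      exact (lt_add_one C).trans_le (le_max_left _ _)
  · have hT : T₀ ≤ Real.exp (t + n * z t) := by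
      simpa only [Real.exp_log hT₀] using Real.exp_le_exp.2 (hσ_ge t ht)
    rw [← hz_rel]
    dsimp only [g]
    rw [max_eq_left hT, Real.exp_log (hψpos _ hT)]
end

section
/- Let m,n be positive integers and ψ : [T_0,∞) → ℝ_+ be continuous and nonincreasing. Let z : [t_0,∞) → ℝ (with t_0 = (m/(m+n))log T_0 − (n/(m+n))log ψ(T_0)) be a continuous function such that t ↦ t+n·z(t) is strictly increasing and unbounded, t ↦ t−m·z(t) is nondecreasing, and ψ(e^{t+n·z(t)}) = e^{−t+m·z(t)} for all t ≥ t_0. Let f be a dimension function satisfying conditions (C1) and (C2) for some α > 0 and some s with nm−n < s ≤ nm. Then ∑_{q=⌈T_0⌉}^∞ (1/(ψ(q)q²))·(q^{1/n}/ψ(q)^{1/m})^{mn}·f(ψ(q)^{1/m}/q^{1/n}) < ∞ if and only if ∑_{t=⌈t_0⌉}^∞ e^{−(m+n)z(t)}·e^{(m+n)t}·f(e^{−(m+n)t/(mn)}) < ∞. -/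
open MeasureTheory Filter Set

noncomputable section

/-- A dimension function: an increasing continuous function `f : ℝ₊ → ℝ₊` with
`f(r) → 0` as `r → 0`. -/
def IsDimFunction (f : ℝ → ℝ) : Prop :=
  (∀ r > (0:ℝ), 0 < f r) ∧ MonotoneOn f (Set.Ioi 0) ∧ ContinuousOn f (Set.Ioi 0) ∧
    Filter.Tendsto f (nhdsWithin 0 (Set.Ioi 0)) (nhds 0)

/-- Condition (C1): `f(xy) ≍ x^s f(y)` for all `x, y > 0` with `y^α ≤ x ≤ y^{1/α}`. -/
def CondC1 (f : ℝ → ℝ) (s α : ℝ) : Prop :=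
  ∃ c₁ > (0:ℝ), ∃ c₂ > (0:ℝ), ∀ x > (0:ℝ), ∀ y > (0:ℝ),
    y ^ α ≤ x → x ≤ y ^ (1/α) →
      c₁ * x ^ s * f y ≤ f (x * y) ∧ f (x * y) ≤ c₂ * x ^ s * f y

/-- Condition (C2): `f'(x) = a(x)·f(x)/x` with `a(x) → s` as `x → 0`. -/
def CondC2 (f : ℝ → ℝ) (s : ℝ) : Prop :=
  ∃ a : ℝ → ℝ, (∀ x > (0:ℝ), HasDerivAt f (a x * f x / x) x) ∧
    Filter.Tendsto a (nhdsWithin 0 (Set.Ioi 0)) (nhds s)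

/-!
Put `L t = t + n z t`, `M t = t - m z t` and let `g t` be the `t`-th summand of the second
series, read as a function of a real `t`. Substituting `q = exp (L t)`, `ψ q = exp (-M t)` turns
the `q`-th summand of the first series into `q⁻¹ g t`, so the first series is
`∑ q⁻¹ g (L⁻¹ (log q))`, a logarithmic time change of `∑ g t`; the two are compared block by block.

Since `M` is nondecreasing, `L` increases by at most `1 + n / m` per unit of time, so the `q`
with `⌊L⁻¹ (log q)⌋ = t` carry harmonic mass `O(1)`; since `f` is increasing and `L`
nondecreasing, `g` grows at most exponentially on unit intervals. Hence the first series is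
bounded by a multiple of the second.

Conversely, (C2) makes `x ↦ f x * x ^ (-σ)` decreasing near `0` for every `σ > s`. Taking
`s < σ < (n + 1) m`, this forces `g t' ≥ c e^{β (t' - t)} g t` with `β > 0` for large `t`, as
long as `L` moves by at most `1`. The `q ∈ [e^{L t}, e^{L t + 1})` have harmonic mass at least
`1 / 4`, and weighting them by `e^{-β (L⁻¹ (log q) - t)}` makes each `q` count only boundedly
often (a geometric series), so the second series is bounded by a multiple of the first.
-/

open Real Topology

theorem tendsto_atTop_atTop_of_monotoneOn_Ici {f : ℝ → ℝ} {a : ℝ} (hf : MonotoneOn f (Ici a))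
    (hf_unbdd : ∀ C, ∃ t ≥ a, C < f t) : Tendsto f atTop atTop :=
  tendsto_atTop_atTop.2 fun C =>
    let ⟨t, ht, hC⟩ := hf_unbdd C
    ⟨t, fun _ ht' => hC.le.trans (hf ht (ht.trans ht') ht')⟩

theorem CondC2.exists_le_mul_div_rpow {f : ℝ → ℝ} {s σ : ℝ} (hC2 : CondC2 f s)
    (hf : ∀ r > 0, 0 < f r) (hσ : s < σ) :
    ∃ δ > 0, ∀ a b, 0 < a → a ≤ b → b ≤ δ → f b ≤ f a * (b / a) ^ σ := by
  obtain ⟨A, hfA, hA⟩ := hC2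
  obtain ⟨δ, hδ, hAσ⟩ :=
    mem_nhdsGT_iff_exists_Ioc_subset.1 (hA.eventually (eventually_lt_nhds hσ))
  have hderiv : ∀ x > 0,
      HasDerivAt (fun x => f x * x ^ (-σ)) ((A x - σ) * (f x * x ^ (-σ - 1))) x := by
    intro x hx
    refine ((hfA x hx).mul (hasDerivAt_rpow_const (p := -σ) (Or.inl hx.ne'))).congr_deriv ?_
    rw [rpow_sub_one hx.ne']
    field_simp
    ring
  have hanti : AntitoneOn (fun x => f x * x ^ (-σ)) (Ioc 0 δ) := by
    refine antitoneOn_of_hasDerivWithinAt_nonpos (convex_Ioc 0 δ)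
      (fun x hx => (hderiv x hx.1).continuousAt.continuousWithinAt)
      (fun x hx => (hderiv x (interior_subset hx : x ∈ Ioc 0 δ).1).hasDerivWithinAt)
      fun x hx => ?_
    have hx : x ∈ Ioc 0 δ := interior_subset hx
    exact mul_nonpos_of_nonpos_of_nonneg (sub_nonpos.2 (hAσ hx).le)
      (mul_pos (hf x hx.1) (rpow_pos_of_pos hx.1 _)).le
  refine ⟨δ, hδ, fun a b ha hab hb => ?_⟩
  have hb0 := ha.trans_le hab
  have h : f b * b ^ (-σ) ≤ f a * a ^ (-σ) := hanti ⟨ha, hab.trans hb⟩ ⟨hb0, hb⟩ hab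
  rw [rpow_neg hb0.le, rpow_neg ha.le, ← div_eq_mul_inv, ← div_eq_mul_inv,
    div_le_iff₀ (rpow_pos_of_pos hb0 σ)] at h
  rwa [div_rpow hb0.le ha.le, mul_div_assoc', ← div_mul_eq_mul_div]

theorem summable_of_le_sum_kernel {u v : ℕ → ℝ} {k : ℕ → ℕ → ℝ} {I : ℕ → Finset ℕ} {D : ℝ}
    {N : ℕ} (hu : Summable u) (hu0 : ∀ q, 0 ≤ u q) (hv0 : ∀ t, 0 ≤ v t)
    (hv : ∀ t ≥ N, v t ≤ ∑ q ∈ I t, k t q * u q)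
    (hD : ∀ q (s : Finset ℕ), (∀ t ∈ s, N ≤ t ∧ q ∈ I t) → ∑ t ∈ s, k t q ≤ D) :
    Summable v := by
  classical
  have hD0 : 0 ≤ D := by simpa using hD 0 ∅
  rw [← summable_nat_add_iff N]
  refine summable_of_sum_range_le (c := D * ∑' q, u q) (fun t => hv0 _) fun T => ?_
  set S := Finset.Ico N (N + T)
  calc ∑ j ∈ Finset.range T, v (j + N) = ∑ t ∈ S, v t := by
        rw [Finset.sum_Ico_eq_sum_range, Nat.add_sub_cancel_left]
        simp only [add_comm]
    _ ≤ ∑ t ∈ S, ∑ q ∈ I t, k t q * u q :=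
        Finset.sum_le_sum fun t ht => hv t (Finset.mem_Ico.1 ht).1
    _ = ∑ q ∈ S.biUnion I, ∑ t ∈ S.filter (q ∈ I ·), k t q * u q :=
        Finset.sum_comm' fun t q => by simp only [Finset.mem_biUnion, Finset.mem_filter]; aesop
    _ ≤ ∑ q ∈ S.biUnion I, D * u q := by
        refine Finset.sum_le_sum fun q _ => ?_
        rw [← Finset.sum_mul]
        refine mul_le_mul_of_nonneg_right (hD q _ fun t ht => ?_) (hu0 q)
        rw [Finset.mem_filter, Finset.mem_Ico] at ht
        exact ⟨ht.1.1, ht.2⟩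
    _ ≤ D * ∑' q, u q := by
        rw [← Finset.mul_sum]
        exact mul_le_mul_of_nonneg_left (hu.sum_le_tsum _ fun q _ => hu0 q) hD0

theorem sum_exp_neg_mul_sub_le {β x : ℝ} (hβ : 0 < β) {s : Finset ℕ}
    (hs : ∀ t ∈ s, (t : ℝ) ≤ x) : ∑ t ∈ s, exp (-(β * (x - t))) ≤ (1 - exp (-β))⁻¹ := by
  set K := ⌊x⌋₊
  have hsK : s ⊆ Finset.range (K + 1) := fun t ht =>
    Finset.mem_range.2 (Nat.lt_succ_of_le (Nat.le_floor (hs t ht)))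
  calc ∑ t ∈ s, exp (-(β * (x - t))) ≤ ∑ t ∈ s, exp (-β) ^ (K - t) := by
        refine Finset.sum_le_sum fun t ht => ?_
        have htK : t ≤ K := Nat.lt_succ_iff.1 (Finset.mem_range.1 (hsK ht))
        have hKx : (K : ℝ) ≤ x := Nat.floor_le ((Nat.cast_nonneg t).trans (hs t ht))
        rw [← exp_nat_mul, Nat.cast_sub htK, exp_le_exp]
        nlinarith
    _ ≤ ∑ t ∈ Finset.range (K + 1), exp (-β) ^ (K - t) :=
        Finset.sum_le_sum_of_subset_of_nonneg hsK fun _ _ _ => by positivity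
    _ = ∑ i ∈ Finset.range (K + 1), exp (-β) ^ i := by
        simpa using Finset.sum_range_reflect (fun i => exp (-β) ^ i) (K + 1)
    _ ≤ (1 - exp (-β))⁻¹ := by
        simpa [← Finset.range_eq_Ico] using geom_sum_Ico_le_of_lt_one (m := 0) (n := K + 1)
          (exp_pos (-β)).le (exp_lt_one_iff.2 (neg_lt_zero.2 hβ))

theorem sum_inv_le_div {a b : ℝ} (ha : 1 ≤ a) (hb : 0 ≤ b) {s : Finset ℕ}
    (hs : ∀ q ∈ s, a ≤ q ∧ (q : ℝ) < b) : ∑ q ∈ s, (q : ℝ)⁻¹ ≤ b / a := by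
  rcases s.eq_empty_or_nonempty with rfl | ⟨q₀, hq₀⟩
  · simpa using div_nonneg hb (zero_le_one.trans ha)
  have hceil : ⌈a⌉₊ ≤ ⌈b⌉₊ := Nat.ceil_mono ((hs q₀ hq₀).1.trans (hs q₀ hq₀).2.le)
  have hcard : (s.card : ℝ) ≤ b + 1 - a := by
    have hsub : s ⊆ Finset.Ico ⌈a⌉₊ ⌈b⌉₊ := fun q hq =>
      Finset.mem_Ico.2 ⟨Nat.ceil_le.2 (hs q hq).1, Nat.lt_ceil.2 (hs q hq).2⟩
    have := Finset.card_le_card hsub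
    rw [Nat.card_Ico] at this
    have h := (Nat.cast_le (α := ℝ)).2 this
    rw [Nat.cast_sub hceil] at h
    linarith [Nat.ceil_lt_add_one hb, Nat.le_ceil a]
  calc ∑ q ∈ s, (q : ℝ)⁻¹ ≤ s.card * a⁻¹ := by
        simpa using Finset.sum_le_card_nsmul s _ a⁻¹ fun q hq =>
          inv_anti₀ (by linarith) (hs q hq).1
    _ ≤ (b + 1 - a) * a⁻¹ := by gcongr
    _ ≤ b / a := by
        rw [div_eq_mul_inv]
        have := inv_pos.2 (zero_lt_one.trans_le ha)
        nlinarith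

theorem sum_inv_le_exp_sub {a b : ℝ} {s : Finset ℕ}
    (hs : ∀ q ∈ s, (1 : ℝ) ≤ q ∧ a ≤ log q ∧ log q < b) :
    ∑ q ∈ s, (q : ℝ)⁻¹ ≤ exp (b - a) := by
  calc ∑ q ∈ s, (q : ℝ)⁻¹ ≤ exp b / max 1 (exp a) := by
        refine sum_inv_le_div (le_max_left _ _) (exp_pos b).le fun q hq => ?_
        obtain ⟨hq1, haq, hqb⟩ := hs q hq
        have hq0 : (0 : ℝ) < q := by linarith
        exact ⟨max_le hq1 ((le_log_iff_exp_le hq0).1 haq), (log_lt_iff_lt_exp hq0).1 hqb⟩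
    _ ≤ exp b / exp a := div_le_div_of_nonneg_left (exp_pos _).le (exp_pos _) (le_max_right _ _)
    _ = exp (b - a) := (exp_sub b a).symm

theorem one_div_four_le_sum_inv {X : ℝ} (hX : 1 ≤ X) :
    1 / 4 ≤ ∑ q ∈ Finset.Ico ⌈X⌉₊ ⌈exp 1 * X⌉₊, (q : ℝ)⁻¹ := by
  have he : 8 / 3 < exp 1 := by linarith [exp_one_gt_d9]
  have hX0 : 0 < X := by linarith
  have hceil : ⌈X⌉₊ ≤ ⌈exp 1 * X⌉₊ := Nat.ceil_mono (by nlinarith)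
  have hcard : (exp 1 - 2) * X ≤ ((Finset.Ico ⌈X⌉₊ ⌈exp 1 * X⌉₊).card : ℝ) := by
    rw [Nat.card_Ico, Nat.cast_sub hceil]
    linarith [Nat.ceil_lt_add_one hX0.le, Nat.le_ceil (exp 1 * X)]
  calc 1 / 4 ≤ (exp 1 - 2) * X * (exp 1 * X)⁻¹ := by
        rw [mul_inv, mul_mul_mul_comm, mul_inv_cancel₀ hX0.ne', mul_one, ← div_eq_mul_inv,
          le_div_iff₀ (by linarith)]
        linarith
    _ ≤ (Finset.Ico ⌈X⌉₊ ⌈exp 1 * X⌉₊).card * (exp 1 * X)⁻¹ := by gcongr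
    _ ≤ ∑ q ∈ Finset.Ico ⌈X⌉₊ ⌈exp 1 * X⌉₊, (q : ℝ)⁻¹ := by
        simpa using Finset.card_nsmul_le_sum _ _ (exp 1 * X)⁻¹ fun q hq =>
          inv_anti₀ (Nat.cast_pos.2 ((Nat.ceil_pos.2 hX0).trans_le (Finset.mem_Ico.1 hq).1))
            (Nat.lt_ceil.1 (Finset.mem_Ico.1 hq).2).le

theorem exp_le_and_log_mem_Ico_of_mem_Ico {x : ℝ} {q : ℕ}
    (hq : q ∈ Finset.Ico ⌈exp x⌉₊ ⌈exp 1 * exp x⌉₊) : exp x ≤ q ∧ x ≤ log q ∧ log q < x + 1 := by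
  rw [Finset.mem_Ico, Nat.ceil_le, Nat.lt_ceil, ← exp_add, add_comm] at hq
  have hq0 : (0 : ℝ) < q := (exp_pos x).trans_le hq.1
  exact ⟨hq.1, (le_log_iff_exp_le hq0).2 hq.1, (log_lt_iff_lt_exp hq0).2 hq.2⟩

section Condensation

variable {L g : ℝ → ℝ} {t₀ : ℝ} {u : ℕ → ℝ}

theorem summable_of_summable_inv_mul {C β : ℝ} (hL : StrictMonoOn L (Ici t₀))
    (hL_top : Tendsto L atTop atTop) (hg : ∀ t, 0 ≤ g t) (hβ : 0 < β) (hC : 0 ≤ C)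
    (hgβ : ∀ᶠ t in atTop, ∀ t', t ≤ t' → L t' ≤ L t + 1 → exp (β * (t' - t)) * g t ≤ C * g t')
    (hu0 : ∀ q, 0 ≤ u q)
    (hτ : ∀ᶠ q : ℕ in atTop, ∃ t ≥ t₀, L t = log q ∧ u q = (q : ℝ)⁻¹ * g t)
    (hu : Summable u) : Summable fun t : ℕ => g t := by
  obtain ⟨Q, hQ⟩ := eventually_atTop.1 hτ
  choose! τ hτt₀ hLτ hgτ using hQ
  obtain ⟨N, hN⟩ := eventually_atTop.1 <| tendsto_natCast_atTop_atTop.eventually <|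
    (eventually_ge_atTop t₀).and <| hgβ.and <|
      (tendsto_exp_atTop.comp hL_top).eventually_ge_atTop (max 1 Q)
  set I : ℕ → Finset ℕ := fun t => Finset.Ico ⌈exp (L t)⌉₊ ⌈exp 1 * exp (L t)⌉₊
  have hI : ∀ t ≥ N, ∀ q ∈ I t, Q ≤ q ∧ (t : ℝ) ≤ τ q ∧ L (τ q) ≤ L t + 1 := by
    intro t ht q hq
    obtain ⟨ht₀, -, hLt⟩ := hN t ht
    obtain ⟨hXq, hlog, hlog'⟩ := exp_le_and_log_mem_Ico_of_mem_Ico hq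
    have hQq : Q ≤ q := by exact_mod_cast (le_max_right _ _).trans (hLt.trans hXq)
    rw [← hLτ q hQq] at hlog hlog'
    exact ⟨hQq, (hL.le_iff_le ht₀ (hτt₀ q hQq)).1 hlog, hlog'.le⟩
  refine summable_of_le_sum_kernel (k := fun t q => 4 * C * exp (-(β * (τ q - t)))) (I := I)
    (D := 4 * C * (1 - exp (-β))⁻¹) (N := N) hu hu0 (fun t => hg t) (fun t ht => ?_)
    fun q s hs => ?_
  · have hX : 1 ≤ exp (L t) := (le_max_left _ _).trans (hN t ht).2.2
    have hI_mass : 1 / 4 ≤ ∑ q ∈ I t, (q : ℝ)⁻¹ := one_div_four_le_sum_inv hX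
    calc g t ≤ 4 * ((∑ q ∈ I t, (q : ℝ)⁻¹) * g t) := by
          nlinarith [mul_le_mul_of_nonneg_right hI_mass (hg t)]
      _ ≤ 4 * ∑ q ∈ I t, C * exp (-(β * (τ q - t))) * u q := by
          rw [Finset.sum_mul]
          refine mul_le_mul_of_nonneg_left (Finset.sum_le_sum fun q hq => ?_) (by norm_num)
          obtain ⟨hQq, htτ, hLτt⟩ := hI t ht q hq
          have hgt : g t ≤ exp (-(β * (τ q - t))) * (C * g (τ q)) := by
            rw [exp_neg, inv_mul_eq_div, le_div_iff₀ (exp_pos _), mul_comm]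
            exact (hN t ht).2.1 (τ q) htτ hLτt
          calc (q : ℝ)⁻¹ * g t ≤ (q : ℝ)⁻¹ * (exp (-(β * (τ q - t))) * (C * g (τ q))) := by
                gcongr
            _ = C * exp (-(β * (τ q - t))) * u q := by rw [hgτ q hQq]; ring
      _ = ∑ q ∈ I t, 4 * C * exp (-(β * (τ q - t))) * u q := by
          rw [Finset.mul_sum]
          simp only [mul_assoc]
  · rw [← Finset.mul_sum]
    exact mul_le_mul_of_nonneg_left (sum_exp_neg_mul_sub_le hβ fun t ht =>
      (hI t (hs t ht).1 q (hs t ht).2).2.1) (by positivity)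

theorem summable_inv_mul_of_summable {K A : ℝ} (hL : StrictMonoOn L (Ici t₀))
    (hL_step : ∀ t ≥ t₀, L (t + 1) ≤ L t + K) (hg : ∀ t, 0 ≤ g t) (hA : 0 ≤ A)
    (hgA : ∀ t t', t₀ ≤ t → t ≤ t' → t' ≤ t + 1 → g t' ≤ A * g t) (hu0 : ∀ q, 0 ≤ u q)
    (hτ : ∀ᶠ q : ℕ in atTop, ∃ t ≥ t₀, L t = log q ∧ u q = (q : ℝ)⁻¹ * g t)
    (hgs : Summable fun t : ℕ => g t) : Summable u := by
  obtain ⟨Q, hQ⟩ := eventually_atTop.1 hτ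
  choose! τ hτt₀ hLτ hgτ using hQ
  obtain ⟨N, hN⟩ := eventually_atTop.1 <| (eventually_ge_atTop (max 1 Q)).and <|
    (tendsto_log_atTop.comp tendsto_natCast_atTop_atTop).eventually_ge_atTop (L ⌈t₀⌉₊)
  set κ : ℕ → ℕ := fun q => ⌊τ q⌋₊
  have hκ : ∀ q ≥ N, Q ≤ q ∧ t₀ ≤ κ q ∧ (κ q : ℝ) ≤ τ q ∧ τ q < κ q + 1 := by
    intro q hq
    have hQq : Q ≤ q := (le_max_right _ _).trans (hN q hq).1
    have hlog : L ⌈t₀⌉₊ ≤ L (τ q) := by rw [hLτ q hQq]; exact (hN q hq).2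
    have hτ : (⌈t₀⌉₊ : ℝ) ≤ τ q := (hL.le_iff_le (Nat.le_ceil t₀) (hτt₀ q hQq)).1 hlog
    exact ⟨hQq, (Nat.le_ceil t₀).trans (by exact_mod_cast Nat.le_floor hτ),
      Nat.floor_le ((Nat.cast_nonneg _).trans hτ), Nat.lt_floor_add_one _⟩
  refine summable_of_le_sum_kernel (k := fun q t => A * (q : ℝ)⁻¹) (I := fun q => {κ q})
    (D := A * exp K) (N := N) hgs (fun t => hg t) hu0 (fun q hq => ?_) ?_
  · obtain ⟨hQq, ht₀κ, hκτ, hτκ⟩ := hκ q hq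
    rw [Finset.sum_singleton, hgτ q hQq, mul_assoc, mul_left_comm]
    exact mul_le_mul_of_nonneg_left (hgA _ _ ht₀κ hκτ hτκ.le) (by positivity)
  · intro t s hs
    rw [← Finset.mul_sum]
    refine mul_le_mul_of_nonneg_left ?_ hA
    rcases s.eq_empty_or_nonempty with rfl | ⟨q₀, hq₀⟩
    · simp [(exp_pos K).le]
    have ht₀ : t₀ ≤ t := by
      obtain ⟨hNq₀, hκq₀⟩ := hs q₀ hq₀
      simpa [Finset.mem_singleton.1 hκq₀] using (hκ q₀ hNq₀).2.1
    refine (sum_inv_le_exp_sub (a := L t) (b := L (t + 1)) fun q hq => ?_).trans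
      (exp_le_exp.2 (by linarith [hL_step t ht₀]))
    obtain ⟨hNq, hκq⟩ := hs q hq
    obtain ⟨hQq, -, hκτ, hτκ⟩ := hκ q hNq
    rw [Finset.mem_singleton] at hκq
    subst hκq
    rw [← hLτ q hQq]
    exact ⟨by exact_mod_cast (le_max_left _ _).trans (hN q hNq).1,
      hL.monotoneOn ht₀ (hτt₀ q hQq) hκτ, hL (hτt₀ q hQq) (by simp; linarith) hτκ⟩

end Condensation

def qSummand (m n : ℕ) (f : ℝ → ℝ) (p q : ℝ) : ℝ :=
  1 / (p * q ^ 2) * (q ^ ((1 : ℝ) / n) / p ^ ((1 : ℝ) / m)) ^ (m * n) *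
    f (p ^ ((1 : ℝ) / m) / q ^ ((1 : ℝ) / n))

def tSummand (m n : ℕ) (f z : ℝ → ℝ) (t : ℝ) : ℝ :=
  exp (-(m + n : ℝ) * z t) * exp ((m + n : ℝ) * t) * f (exp (-((m + n : ℝ) * t) / (m * n)))

section Summands

variable {m n : ℕ} {f z : ℝ → ℝ}

theorem qSummand_nonneg (hf : ∀ r > 0, 0 < f r) {p q : ℝ} (hp : 0 < p) (hq : 0 < q) :
    0 ≤ qSummand m n f p q :=
  mul_nonneg (by positivity) (hf _ (by positivity)).le

theorem qSummand_exp (hm : m ≠ 0) (hn : n ≠ 0) (t : ℝ) :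
    qSummand m n f (exp (-t + m * z t)) (exp (t + n * z t)) =
      (exp (t + n * z t))⁻¹ * tSummand m n f z t := by
  simp only [qSummand, tSummand, ← exp_mul, ← exp_sub, ← exp_nat_mul, one_div, ← exp_add,
    ← exp_neg, ← mul_assoc]
  congr 1
  · congr 1
    push_cast
    field_simp
    ring
  · congr 2
    field_simp
    ring

theorem tSummand_pos (hf : ∀ r > 0, 0 < f r) (t : ℝ) : 0 < tSummand m n f z t :=
  mul_pos (by positivity) (hf _ (exp_pos _))

theorem tSummand_le (hn : 0 < n) (hf : ∀ r > 0, 0 < f r) (hf_mono : MonotoneOn f (Ioi 0))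
    {t t' : ℝ} (htt' : t ≤ t') (ht' : t' ≤ t + 1) (hz : t + n * z t ≤ t' + n * z t') :
    tSummand m n f z t' ≤ exp ((m + n) * (n + 1) / n) * tSummand m n f z t := by
  have hn0 : (0 : ℝ) < n := by exact_mod_cast hn
  have hf' : f (exp (-((m + n : ℝ) * t') / (m * n))) ≤ f (exp (-((m + n : ℝ) * t) / (m * n))) :=
    hf_mono (exp_pos _) (exp_pos _) (exp_le_exp.2 (div_le_div_of_nonneg_right
      (by nlinarith) (by positivity)))
  have hexp : exp (-(m + n : ℝ) * z t') * exp ((m + n : ℝ) * t') ≤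
      exp ((m + n) * (n + 1) / n) * (exp (-(m + n : ℝ) * z t) * exp ((m + n : ℝ) * t)) := by
    rw [← exp_add, ← exp_add, ← exp_add, exp_le_exp, mul_div_assoc]
    have : t' - z t' ≤ (n + 1) / n + (t - z t) := by
      rw [div_add' _ _ _ hn0.ne', le_div_iff₀ hn0]
      nlinarith
    nlinarith
  unfold tSummand
  calc _ ≤ exp (-(m + n : ℝ) * z t') * exp ((m + n : ℝ) * t') *
        f (exp (-((m + n : ℝ) * t) / (m * n))) := by gcongr
    _ ≤ _ := by
        rw [← mul_assoc]
        exact mul_le_mul_of_nonneg_right hexp (hf _ (exp_pos _)).le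

theorem exp_mul_tSummand_le (hm : 0 < m) (hn : 0 < n) (hf : ∀ r > 0, 0 < f r) {δ σ : ℝ}
    (hfδ : ∀ a b, 0 < a → a ≤ b → b ≤ δ → f b ≤ f a * (b / a) ^ σ) {t t' : ℝ} (htt' : t ≤ t')
    (hz : t' + n * z t' ≤ t + n * z t + 1) (hδ : exp (-((m + n : ℝ) * t) / (m * n)) ≤ δ) :
    exp ((m + n) / n * (n + 1 - σ / m) * (t' - t)) * tSummand m n f z t ≤
      exp ((m + n) / n) * tSummand m n f z t' := by
  have hm0 : (0 : ℝ) < m := by exact_mod_cast hm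
  have hn0 : (0 : ℝ) < n := by exact_mod_cast hn
  have hab : exp (-((m + n : ℝ) * t') / (m * n)) ≤ exp (-((m + n : ℝ) * t) / (m * n)) :=
    exp_le_exp.2 (div_le_div_of_nonneg_right (by nlinarith) (by positivity))
  have hfab := hfδ _ _ (exp_pos _) hab hδ
  rw [← exp_sub, ← exp_mul] at hfab
  unfold tSummand
  set a := f (exp (-((m + n : ℝ) * t') / (m * n)))
  have ha : 0 < a := hf _ (exp_pos _)
  -- the `f`-ratio costs `σ (m + n) / (m n)` per unit of time; the exponential factors gain
  -- `(m + n) / n` times `(n + 1) (t' - t) - (t' + n z t' - (t + n z t))`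
  calc _ ≤ exp ((m + n) / n * (n + 1 - σ / m) * (t' - t)) *
        (exp (-(m + n : ℝ) * z t) * exp ((m + n : ℝ) * t)) *
        (a * exp ((-((m + n : ℝ) * t) / (m * n) - -((m + n : ℝ) * t') / (m * n)) * σ)) := by
        rw [← mul_assoc]; gcongr
    _ = exp ((m + n) / n * (t' + n * z t' - (t + n * z t)) +
          (-(m + n : ℝ) * z t' + (m + n : ℝ) * t')) * a := by
        rw [mul_comm a, ← mul_assoc, ← exp_add, ← exp_add, ← exp_add]
        congr 2
        field_simp
        ring
    _ ≤ _ := by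
        rw [← exp_add, ← mul_assoc, ← exp_add]
        gcongr
        have := mul_le_mul_of_nonneg_left (show t' + n * z t' - (t + n * z t) ≤ 1 by linarith)
          (by positivity : (0 : ℝ) ≤ (m + n) / n)
        linarith

theorem exists_pos_eventually_exp_mul_tSummand_le (hm : 0 < m) (hn : 0 < n)
    (hf : ∀ r > 0, 0 < f r) {δ σ : ℝ} (hδ : 0 < δ)
    (hfδ : ∀ a b, 0 < a → a ≤ b → b ≤ δ → f b ≤ f a * (b / a) ^ σ) (hσ : σ < (n + 1) * m) :
    ∃ β > 0, ∀ᶠ t in atTop, ∀ t', t ≤ t' → t' + n * z t' ≤ t + n * z t + 1 →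
      exp (β * (t' - t)) * tSummand m n f z t ≤ exp ((m + n) / n) * tSummand m n f z t' := by
  have hm0 : (0 : ℝ) < m := by exact_mod_cast hm
  refine ⟨(m + n) / n * (n + 1 - σ / m), mul_pos (by positivity) ?_, ?_⟩
  · rwa [sub_pos, div_lt_iff₀ hm0]
  have hexp : Tendsto (fun t : ℝ => exp (-((m + n : ℝ) * t) / (m * n))) atTop (𝓝 0) :=
    tendsto_exp_atBot.comp <| (tendsto_neg_atTop_atBot.comp <|
      tendsto_id.const_mul_atTop (by positivity)).atBot_div_const (by positivity)
  filter_upwards [hexp.eventually (eventually_le_nhds hδ)] with t ht t' htt' hz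
  exact exp_mul_tSummand_le hm hn hf hfδ htt' hz ht

theorem add_one_add_mul_le {t₀ : ℝ} (hm : 0 < m) (hz : MonotoneOn (fun t => t - m * z t) (Ici t₀))
    {t : ℝ} (ht : t₀ ≤ t) : t + 1 + n * z (t + 1) ≤ t + n * z t + (1 + n / m) := by
  have hm0 : (0 : ℝ) < m := by exact_mod_cast hm
  have h : z (t + 1) - z t ≤ 1 / m := by
    rw [le_div_iff₀ hm0]
    linarith [hz ht (show t₀ ≤ t + 1 by linarith) (by linarith)]
  have := mul_le_mul_of_nonneg_left h (Nat.cast_nonneg (α := ℝ) n)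
  rw [mul_one_div] at this
  linarith

theorem eventually_exists_qSummand_eq (hm : m ≠ 0) (hn : n ≠ 0) {T₀ t₀ : ℝ} (hT₀ : 0 < T₀)
    {ψ : ℝ → ℝ} (hzc : ContinuousOn z (Ici t₀)) (hL : Tendsto (fun t => t + n * z t) atTop atTop)
    (hψ : ∀ t ≥ t₀, ψ (exp (t + n * z t)) = exp (-t + m * z t)) :
    ∀ᶠ q : ℕ in atTop, ∃ t ≥ t₀, t + n * z t = log q ∧
      (if T₀ ≤ (q : ℝ) then qSummand m n f (ψ q) q else 0) = (q : ℝ)⁻¹ * tSummand m n f z t := by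
  filter_upwards [tendsto_natCast_atTop_atTop.eventually_ge_atTop T₀,
    (tendsto_log_atTop.comp tendsto_natCast_atTop_atTop).eventually_ge_atTop (t₀ + n * z t₀)]
    with q hTq hLq
  obtain ⟨t, ht, hLt⟩ := intermediate_value_Ici (f := fun t => t + n * z t)
    (continuousOn_id.add (continuousOn_const.mul hzc)) hL hLq
  replace hLt : t + n * z t = log q := hLt
  have hq : (q : ℝ) = exp (t + n * z t) := by rw [hLt, exp_log (hT₀.trans_le hTq)]
  refine ⟨t, ht, hLt, ?_⟩
  rw [if_pos hTq, hq, hψ t ht]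
  exact qSummand_exp hm hn t

end Summands

theorem stmt_13_general (m n : ℕ) (hm : 0 < m) (hn : 0 < n) (T₀ : ℝ) (hT₀ : 1 < T₀)
    (ψ : ℝ → ℝ) (hψpos : ∀ x ≥ T₀, 0 < ψ x)
    (t₀ : ℝ)
    (z : ℝ → ℝ) (hzc : ContinuousOn z (Set.Ici t₀))
    (hz1 : StrictMonoOn (fun t => t + n * z t) (Set.Ici t₀))
    (hz1' : ∀ C : ℝ, ∃ t ≥ t₀, C < t + n * z t)
    (hz2 : MonotoneOn (fun t => t - m * z t) (Set.Ici t₀))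
    (hz3 : ∀ t ≥ t₀, ψ (Real.exp (t + n * z t)) = Real.exp (-t + m * z t))
    (f : ℝ → ℝ) (hf : IsDimFunction f) (s : ℝ)
    (hs2 : s ≤ (n : ℝ) * m)
    (hC2 : CondC2 f s) :
    Summable (fun q : ℕ => if T₀ ≤ (q:ℝ) then
        1 / (ψ q * (q:ℝ)^2) * ((q:ℝ) ^ ((1:ℝ)/n) / (ψ q) ^ ((1:ℝ)/m)) ^ (m * n) *
          f ((ψ q) ^ ((1:ℝ)/m) / (q:ℝ) ^ ((1:ℝ)/n)) else 0) ↔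
    Summable (fun t : ℕ => if t₀ ≤ (t:ℝ) then
        Real.exp (-(m + n : ℝ) * z t) * Real.exp ((m + n : ℝ) * t) *
          f (Real.exp (-((m + n : ℝ) * t) / (m * n))) else 0) := by
  obtain ⟨hf0, hf_mono, -, -⟩ := hf
  obtain ⟨δ, hδ, hfδ⟩ := hC2.exists_le_mul_div_rpow hf0 (lt_add_of_pos_right s one_half_pos)
  obtain ⟨β, hβ, hgβ⟩ := exists_pos_eventually_exp_mul_tSummand_le (z := z) hm hn hf0 hδ hfδ
    (by rw [add_one_mul]; linarith [show (1 : ℝ) ≤ m by exact_mod_cast hm])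
  have hL_top := tendsto_atTop_atTop_of_monotoneOn_Ici hz1.monotoneOn hz1'
  have hU := eventually_exists_qSummand_eq (f := f) (T₀ := T₀) hm.ne' hn.ne' (by linarith) hzc
    hL_top hz3
  have hU0 : ∀ q : ℕ, 0 ≤ if T₀ ≤ (q : ℝ) then qSummand m n f (ψ q) q else 0 := fun q => by
    split_ifs with hq
    exacts [qSummand_nonneg hf0 (hψpos q hq) (by linarith), le_rfl]
  have hV : (fun t : ℕ => if t₀ ≤ (t : ℝ) then tSummand m n f z t else 0) =ᶠ[atTop]
      fun t => tSummand m n f z t :=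
    eventually_atTop.2 ⟨⌈t₀⌉₊, fun t ht => if_pos (Nat.ceil_le.1 ht)⟩
  change Summable (fun q : ℕ => if T₀ ≤ (q : ℝ) then qSummand m n f (ψ q) q else 0) ↔
    Summable fun t : ℕ => if t₀ ≤ (t : ℝ) then tSummand m n f z t else 0
  rw [summable_congr_atTop hV]
  exact ⟨summable_of_summable_inv_mul hz1 hL_top (fun t => (tSummand_pos hf0 t).le) hβ
      (exp_pos _).le hgβ hU0 hU,
    summable_inv_mul_of_summable hz1 (fun t ht => add_one_add_mul_le hm hz2 ht)
      (fun t => (tSummand_pos hf0 t).le) (exp_pos _).le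
      (fun t t' ht htt' ht' => tSummand_le hn hf0 hf_mono htt' ht'
        (hz1.monotoneOn ht (ht.trans htt') htt')) hU0 hU⟩

/-- **Series equivalence for the Dani correspondence**: with `z = z_ψ` the function
associated to `ψ` and `f` a dimension function satisfying (C1) and (C2) with
`nm − n < s ≤ nm`, the series `∑_{q≥T₀} (1/(ψ(q)q²))·(q^{1/n}/ψ(q)^{1/m})^{mn}·
f(ψ(q)^{1/m}/q^{1/n})` converges if and only if the series
`∑_{t≥t₀} e^{−(m+n)z(t)}·e^{(m+n)t}·f(e^{−(m+n)t/(mn)})` converges. -/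
theorem stmt_13 (m n : ℕ) (hm : 0 < m) (hn : 0 < n) (T₀ : ℝ) (hT₀ : 1 < T₀)
    (ψ : ℝ → ℝ) (hψc : ContinuousOn ψ (Set.Ici T₀))
    (hψmono : AntitoneOn ψ (Set.Ici T₀)) (hψpos : ∀ x ≥ T₀, 0 < ψ x)
    (t₀ : ℝ)
    (ht₀ : t₀ = ((m : ℝ) / (m + n)) * Real.log T₀ - ((n : ℝ) / (m + n)) * Real.log (ψ T₀))
    (z : ℝ → ℝ) (hzc : ContinuousOn z (Set.Ici t₀))
    (hz1 : StrictMonoOn (fun t => t + n * z t) (Set.Ici t₀))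
    (hz1' : ∀ C : ℝ, ∃ t ≥ t₀, C < t + n * z t)
    (hz2 : MonotoneOn (fun t => t - m * z t) (Set.Ici t₀))
    (hz3 : ∀ t ≥ t₀, ψ (Real.exp (t + n * z t)) = Real.exp (-t + m * z t))
    (f : ℝ → ℝ) (hf : IsDimFunction f) (α s : ℝ) (hα : 0 < α)
    (hs1 : (n : ℝ) * m - n < s) (hs2 : s ≤ (n : ℝ) * m)
    (hC1 : CondC1 f s α) (hC2 : CondC2 f s) :
    Summable (fun q : ℕ => if T₀ ≤ (q:ℝ) then
        1 / (ψ q * (q:ℝ)^2) * ((q:ℝ) ^ ((1:ℝ)/n) / (ψ q) ^ ((1:ℝ)/m)) ^ (m * n) *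
          f ((ψ q) ^ ((1:ℝ)/m) / (q:ℝ) ^ ((1:ℝ)/n)) else 0) ↔
    Summable (fun t : ℕ => if t₀ ≤ (t:ℝ) then
        Real.exp (-(m + n : ℝ) * z t) * Real.exp ((m + n : ℝ) * t) *
          f (Real.exp (-((m + n : ℝ) * t) / (m * n))) else 0) :=
  stmt_13_general m n hm hn T₀ hT₀ ψ hψpos t₀ z hzc hz1 hz1' hz2 hz3 f hf s hs2 hC2
end
end

section
/- Let m,n be positive integers, d = m+n, and ψ : [T_0,∞) → ℝ_+ be continuous, strictly decreasing with ψ(T) → 0 as T → ∞. Define ψ̃ : [S_0,∞) → ℝ_+ by ψ̃(S) = (ψ^{−1}(S^{−m}))^{−1/n}, where S_0 = ψ(T_0)^{−1/m} and ψ^{−1} is the inverse function of ψ. Given an m×n real matrix A and b ∈ ℝ^m, if the system ‖ᵗA x‖_ℤ < d^{−1}·|b·x|_ℤ·ψ̃(S) and ‖x‖ < d^{−1}·|b·x|_ℤ·S has a nontrivial solution x ∈ ℤ^m for an unbounded set of S ≥ S_0, then (A,b) is not ψ-Dirichlet improvable. -/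
/-! If `(A, b)` were `ψ`-Dirichlet improvable, take a large `S` with a solution `x` and put
`T = ψ⁻¹(S^{-m})`: improvability gives `p, q` with `‖Aq + b - p‖ < S⁻¹` and
`‖q‖ < T^{1/n} = ψ̃(S)⁻¹`. For an integer vector `r`, the integer `p·x - r·q` differs from `b·x`
by `x·(Aq + b - p) - (ᵗAx - r)·q`, of absolute value at most
`m ‖x‖ ‖Aq + b - p‖ + n ‖ᵗAx - r‖ ‖q‖`. Taking `r` nearest to `ᵗAx`, the two hypotheses on `x`
make this less than `(m/d + n/d) |b·x|_ℤ = |b·x|_ℤ`, which is absurd. -/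

open MeasureTheory Filter Set

noncomputable section

/-- A pair `(A, b)` is `ψ`-Dirichlet improvable if for all sufficiently large `T` there exist
`p ∈ ℤ^m` and `q ∈ ℤ^n \ {0}` with `‖Aq + b - p‖^m < ψ(T)` and `‖q‖^n < T`. -/
def DirichletImprovable (m n : ℕ) (ψ : ℝ → ℝ) (A : Fin m → Fin n → ℝ) (b : Fin m → ℝ) : Prop :=
  ∀ᶠ T in Filter.atTop, ∃ (p : Fin m → ℤ) (q : Fin n → ℤ), q ≠ 0 ∧
    ‖(fun i => (∑ j, A i j * (q j : ℝ)) + b i - (p i : ℝ) : Fin m → ℝ)‖ ^ m < ψ T ∧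
    ‖toR q‖ ^ n < T

/-- `|x|_ℤ`: the distance from `x ∈ ℝ` to the nearest integer. -/
def nearInt (x : ℝ) : ℝ := ⨅ p : ℤ, |x - (p : ℝ)|

/-- `‖v‖_ℤ`: the supremum-norm distance from `v ∈ ℝ^k` to the nearest integer vector. -/
def nearIntVec {k : ℕ} (v : Fin k → ℝ) : ℝ :=
  ⨅ p : Fin k → ℤ, ‖(fun i => v i - (p i : ℝ) : Fin k → ℝ)‖

lemma nearInt_le (x : ℝ) (k : ℤ) : nearInt x ≤ |x - k| :=
  ciInf_le ⟨0, by rintro _ ⟨j, rfl⟩; positivity⟩ k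

lemma nearIntVec_nonneg {k : ℕ} (v : Fin k → ℝ) : 0 ≤ nearIntVec v :=
  le_ciInf fun _ => norm_nonneg _

lemma abs_sum_mul_le_card_mul_norm {ι : Type*} [Fintype ι] (u v : ι → ℝ) :
    |∑ i, u i * v i| ≤ Fintype.card ι * (‖u‖ * ‖v‖) := by
  calc |∑ i, u i * v i| ≤ ∑ i, |u i * v i| := Finset.abs_sum_le_sum_abs _ _
    _ ≤ ∑ _i : ι, ‖u‖ * ‖v‖ := by
        refine Finset.sum_le_sum fun i _ => ?_
        rw [abs_mul]
        exact mul_le_mul (norm_le_pi_norm u i) (norm_le_pi_norm v i) (abs_nonneg _) (norm_nonneg _)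
    _ = Fintype.card ι * (‖u‖ * ‖v‖) := by simp

lemma sum_mul_sub_int_eq {m n : ℕ} (A : Fin m → Fin n → ℝ) (b : Fin m → ℝ)
    (x p : Fin m → ℤ) (q r : Fin n → ℤ) :
    ∑ i, b i * x i - ((∑ i, p i * x i - ∑ j, r j * q j : ℤ) : ℝ) =
      ∑ i, x i * ((∑ j, A i j * q j) + b i - p i) -
        ∑ j, ((∑ i, A i j * x i) - r j) * q j := by
  have hswap : ∑ i, (x i : ℝ) * ∑ j, A i j * q j = ∑ j, (∑ i, A i j * x i) * q j := by
    simp only [Finset.mul_sum, Finset.sum_mul]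
    rw [Finset.sum_comm]
    exact Finset.sum_congr rfl fun _ _ => Finset.sum_congr rfl fun _ _ => by ring
  simp only [mul_add, mul_sub, sub_mul, Finset.sum_add_distrib, Finset.sum_sub_distrib]
  rw [hswap]
  push_cast
  simp only [mul_comm (x _ : ℝ)]
  ring

theorem nearInt_sum_mul_le {m n : ℕ} (A : Fin m → Fin n → ℝ) (b : Fin m → ℝ)
    (x p : Fin m → ℤ) (q : Fin n → ℤ) :
    nearInt (∑ i, b i * x i) ≤
      m * (‖toR x‖ * ‖(fun i => (∑ j, A i j * (q j : ℝ)) + b i - (p i : ℝ) : Fin m → ℝ)‖) +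
        n * (nearIntVec (fun j => ∑ i, A i j * (x i : ℝ)) * ‖toR q‖) := by
  rw [← sub_le_iff_le_add', nearIntVec, Real.iInf_mul_of_nonneg (norm_nonneg _),
    Real.mul_iInf_of_nonneg (Nat.cast_nonneg n)]
  refine le_ciInf fun r => sub_le_iff_le_add'.2 ?_
  calc nearInt (∑ i, b i * x i)
      ≤ |∑ i, b i * x i - ((∑ i, p i * x i - ∑ j, r j * q j : ℤ) : ℝ)| := nearInt_le _ _
    _ ≤ |∑ i, x i * ((∑ j, A i j * q j) + b i - p i)| +
          |∑ j, ((∑ i, A i j * x i) - r j) * q j| := by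
        rw [sum_mul_sub_int_eq A b x p q r]
        exact abs_sub _ _
    _ ≤ _ := by
        gcongr
        · simpa [toR] using abs_sum_mul_le_card_mul_norm (toR x) _
        · simpa [toR] using abs_sum_mul_le_card_mul_norm _ (toR q)

theorem nearInt_sum_mul_lt {m n : ℕ} (hm : 0 < m) (A : Fin m → Fin n → ℝ) (b : Fin m → ℝ)
    (x p : Fin m → ℤ) (q : Fin n → ℤ) {ε : ℝ}
    (hx : ‖toR x‖ * ‖(fun i => (∑ j, A i j * (q j : ℝ)) + b i - (p i : ℝ) : Fin m → ℝ)‖ < ε)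
    (hq : nearIntVec (fun j => ∑ i, A i j * (x i : ℝ)) * ‖toR q‖ ≤ ε) :
    nearInt (∑ i, b i * x i) < (m + n) * ε :=
  calc nearInt (∑ i, b i * x i) ≤ _ := nearInt_sum_mul_le A b x p q
    _ < m * ε + n * ε := add_lt_add_of_lt_of_le (mul_lt_mul_of_pos_left hx (by exact_mod_cast hm))
          (mul_le_mul_of_nonneg_left hq n.cast_nonneg)
    _ = (m + n) * ε := (add_mul _ _ _).symm

lemma rpow_neg_natCast_le_of_rpow_neg_inv_le {a S : ℝ} {m : ℕ} (hm : 0 < m) (ha : 0 < a)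
    (h : a ^ (-(1 : ℝ) / m) ≤ S) : S ^ (-(m : ℝ)) ≤ a := by
  calc S ^ (-(m : ℝ)) ≤ (a ^ (-(1 : ℝ) / m)) ^ (-(m : ℝ)) :=
        Real.rpow_le_rpow_of_nonpos (Real.rpow_pos_of_pos ha _) h (by simp)
    _ = a := by
        rw [← Real.rpow_mul ha.le, div_mul_eq_mul_div, neg_mul_neg, one_mul,
          div_self (by positivity), Real.rpow_one]

lemma lt_inv_of_pow_lt_rpow_neg_natCast {a S : ℝ} {m : ℕ} (hS : 0 < S)
    (h : a ^ m < S ^ (-(m : ℝ))) : a < S⁻¹ := by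
  rw [Real.rpow_neg hS.le, Real.rpow_natCast, ← inv_pow] at h
  exact lt_of_pow_lt_pow_left₀ m (inv_nonneg.2 hS.le) h

lemma lt_inv_rpow_neg_one_div_of_pow_lt {a T : ℝ} {n : ℕ} (hn : 0 < n) (ha : 0 ≤ a)
    (h : a ^ n < T) : a < (T ^ (-(1 : ℝ) / n))⁻¹ := by
  have hT : 0 ≤ T := (pow_nonneg ha n).trans h.le
  rw [neg_div, Real.rpow_neg hT, inv_inv, one_div,
    Real.lt_rpow_inv_iff_of_pos ha hT (by exact_mod_cast hn), Real.rpow_natCast]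
  exact h

lemma mul_lt_of_lt_mul_of_le_inv {a s X E : ℝ} (hs : 0 < s) (hX₀ : 0 ≤ X) (hX : X < a * s)
    (hE : E ≤ s⁻¹) : X * E < a :=
  calc X * E ≤ X * s⁻¹ := mul_le_mul_of_nonneg_left hE hX₀
    _ < a * s * s⁻¹ := mul_lt_mul_of_pos_right hX (inv_pos.2 hs)
    _ = a := by field_simp

lemma le_inv_and_apply_inv_eq {ψ ψinv : ℝ → ℝ} {T₀ M y : ℝ}
    (hψanti : StrictAntiOn ψ (Ici T₀))
    (hψinv : ∀ y, 0 < y → y ≤ ψ T₀ → T₀ ≤ ψinv y ∧ ψ (ψinv y) = y)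
    (hM : T₀ ≤ M) (hy : 0 < y) (hyM : y ≤ ψ M) : M ≤ ψinv y ∧ ψ (ψinv y) = y := by
  obtain ⟨hT₀, hψ⟩ := hψinv y hy (hyM.trans (hψanti.antitoneOn self_mem_Ici hM hM))
  exact ⟨(hψanti.le_iff_ge hT₀ hM).1 (by rwa [hψ]), hψ⟩

theorem stmt_16_general (m n : ℕ) (hm : 0 < m) (hn : 0 < n) (d : ℕ) (hd : d = m + n)
    (T₀ : ℝ)
    (ψ : ℝ → ℝ)
    (hψanti : StrictAntiOn ψ (Set.Ici T₀)) (hψpos : ∀ x ≥ T₀, 0 < ψ x)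
    (ψinv : ℝ → ℝ)
    (hψinv : ∀ y, 0 < y → y ≤ ψ T₀ → T₀ ≤ ψinv y ∧ ψ (ψinv y) = y)
    (S₀ : ℝ)
    (A : Fin m → Fin n → ℝ) (b : Fin m → ℝ)
    (hsol : ∀ S₁ : ℝ, ∃ S : ℝ, S₀ ≤ S ∧ S₁ ≤ S ∧ ∃ x : Fin m → ℤ, x ≠ 0 ∧
      nearIntVec (fun j => ∑ i, A i j * (x i : ℝ)) <
        (d : ℝ)⁻¹ * nearInt (∑ i, b i * (x i : ℝ)) *
          (ψinv (S ^ (-(m:ℝ)))) ^ (-(1:ℝ)/n) ∧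
      ‖toR x‖ < (d : ℝ)⁻¹ * nearInt (∑ i, b i * (x i : ℝ)) * S) :
    ¬ DirichletImprovable m n ψ A b := by
  intro hDI
  obtain ⟨T₁, hT₁⟩ := eventually_atTop.1 hDI
  have hT₀M : T₀ ≤ max T₁ T₀ := le_max_right _ _
  have hψM : 0 < ψ (max T₁ T₀) := hψpos _ hT₀M
  obtain ⟨S, -, hMS, x, -, hxA, hxb⟩ := hsol (ψ (max T₁ T₀) ^ (-(1 : ℝ) / m))
  have hS : 0 < S := (Real.rpow_pos_of_pos hψM _).trans_le hMS
  obtain ⟨hMT, hψT⟩ := le_inv_and_apply_inv_eq hψanti hψinv hT₀M (Real.rpow_pos_of_pos hS _)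
    (rpow_neg_natCast_le_of_rpow_neg_inv_le hm hψM hMS)
  set T := ψinv (S ^ (-(m : ℝ)))
  obtain ⟨p, q, -, he, hq⟩ := hT₁ T ((le_max_left _ _).trans hMT)
  rw [hψT] at he
  have hq' := lt_inv_rpow_neg_one_div_of_pow_lt hn (norm_nonneg _) hq
  have hT : 0 < T := (pow_nonneg (norm_nonneg _) n).trans_lt hq
  have hd' : (d : ℝ) = m + n := by exact_mod_cast hd
  have hlt := nearInt_sum_mul_lt hm A b x p q
    (mul_lt_of_lt_mul_of_le_inv hS (norm_nonneg _) hxb (lt_inv_of_pow_lt_rpow_neg_natCast hS he).le)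
    (mul_lt_of_lt_mul_of_le_inv (Real.rpow_pos_of_pos hT _) (nearIntVec_nonneg _) hxA hq'.le).le
  rw [← hd', mul_inv_cancel_left₀ (by rw [hd']; positivity)] at hlt
  exact lt_irrefl _ hlt

/-- **Transference lemma (Cassels)**: let `ψ̃(S) = (ψ⁻¹(S^{−m}))^{−1/n}` with
`S₀ = ψ(T₀)^{−1/m}`. If the system `‖ᵗA x‖_ℤ < d⁻¹|b·x|_ℤ ψ̃(S)`,
`‖x‖ < d⁻¹|b·x|_ℤ S` has a nontrivial solution `x ∈ ℤ^m` for an unbounded set of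
`S ≥ S₀`, then `(A, b)` is not `ψ`-Dirichlet improvable. -/
theorem stmt_16 (m n : ℕ) (hm : 0 < m) (hn : 0 < n) (d : ℕ) (hd : d = m + n)
    (T₀ : ℝ) (hT₀ : 1 < T₀)
    (ψ : ℝ → ℝ) (hψc : ContinuousOn ψ (Set.Ici T₀))
    (hψanti : StrictAntiOn ψ (Set.Ici T₀)) (hψpos : ∀ x ≥ T₀, 0 < ψ x)
    (hψ0 : Filter.Tendsto ψ Filter.atTop (nhds 0))
    (ψinv : ℝ → ℝ)
    (hψinv : ∀ y, 0 < y → y ≤ ψ T₀ → T₀ ≤ ψinv y ∧ ψ (ψinv y) = y)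
    (S₀ : ℝ) (hS₀ : S₀ = (ψ T₀) ^ (-(1:ℝ)/m))
    (A : Fin m → Fin n → ℝ) (b : Fin m → ℝ)
    (hsol : ∀ S₁ : ℝ, ∃ S : ℝ, S₀ ≤ S ∧ S₁ ≤ S ∧ ∃ x : Fin m → ℤ, x ≠ 0 ∧
      nearIntVec (fun j => ∑ i, A i j * (x i : ℝ)) <
        (d : ℝ)⁻¹ * nearInt (∑ i, b i * (x i : ℝ)) *
          (ψinv (S ^ (-(m:ℝ)))) ^ (-(1:ℝ)/n) ∧
      ‖toR x‖ < (d : ℝ)⁻¹ * nearInt (∑ i, b i * (x i : ℝ)) * S) :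
    ¬ DirichletImprovable m n ψ A b :=
  stmt_16_general m n hm hn d hd T₀ ψ hψanti hψpos ψinv hψinv S₀ A b hsol
end
end
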